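/- arXiv:1303.2861 — 4 statements merged into one kernel-verified Lean document; each statement's English description precedes it below -/
import Mathlib

section
/- For all ν ∈ (0,1), Z(ν) := (1/ν)·(1/Γ(2ν) − 1/(ν·Γ(ν)²)) > 0, and Z(1) = 0. -/
open MeasureTheory intervalIntegral Real

/-- Key inequality: for `ν ∈ (0,1)`, `Γ(2ν) < ν Γ(ν)²`. -/
lemma Gamma_two_mul_lt {ν : ℝ} (h0 : 0 < ν) (h1 : ν < 1) :
    Real.Gamma (2 * ν) < ν * Real.Gamma ν ^ 2 := by
  set f : ℝ → ℝ := fun t => t ^ (ν - 1) * (1 - t) ^ (ν - 1) with hf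
  have hre : (0 : ℝ) < ((ν : ℂ)).re := by simpa using h0
  -- the complex beta integrand coincides with `ofReal ∘ f` on `[0,1]`
  have hcongr : ∀ t : ℝ, t ∈ Set.Icc (0:ℝ) 1 →
      ((t : ℂ) ^ ((ν : ℂ) - 1) * (1 - (t : ℂ)) ^ ((ν : ℂ) - 1)) = ((f t : ℝ) : ℂ) := by
    intro t ht
    have h1t : (0:ℝ) ≤ 1 - t := by linarith [ht.2]
    have e1 : ((ν : ℂ) - 1) = ((ν - 1 : ℝ) : ℂ) := by push_cast; ring
    have e2 : (1 - (t : ℂ)) = (((1 - t : ℝ)) : ℂ) := by push_cast; ring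
    rw [e1, e2, ← Complex.ofReal_cpow ht.1, ← Complex.ofReal_cpow h1t, hf]
    push_cast; ring
  have hG := Complex.betaIntegral_convergent (u := (ν : ℂ)) (v := (ν : ℂ)) hre hre
  -- `f` is interval integrable on `[0,1]`
  have hf_int : IntervalIntegrable f volume 0 1 := by
    rw [intervalIntegrable_iff] at hG ⊢
    have hGre : IntegrableOn (fun t : ℝ =>
        ((t : ℂ) ^ ((ν : ℂ) - 1) * (1 - (t : ℂ)) ^ ((ν : ℂ) - 1)).re) (Set.uIoc 0 1) volume :=
      hG.re
    refine hGre.congr_fun (fun t ht => ?_) measurableSet_uIoc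
    rw [Set.uIoc_of_le (by norm_num : (0:ℝ) ≤ 1)] at ht
    beta_reduce; rw [hcongr t ⟨ht.1.le, ht.2⟩, Complex.ofReal_re]
  set I : ℝ := ∫ t in (0:ℝ)..1, f t with hI
  -- Beta integral identity over ℝ
  have hbeta : Real.Gamma ν * Real.Gamma ν = Real.Gamma (2 * ν) * I := by
    have h := Complex.Gamma_mul_Gamma_eq_betaIntegral hre hre
    have hval : Complex.betaIntegral ν ν = (I : ℂ) := by
      rw [Complex.betaIntegral, hI, ← intervalIntegral.integral_ofReal]
      refine intervalIntegral.integral_congr (fun t ht => ?_)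
      rw [Set.uIcc_of_le (by norm_num : (0:ℝ) ≤ 1)] at ht
      exact hcongr t ht
    rw [hval] at h
    have h2 : ((ν : ℂ) + ν) = ((2 * ν : ℝ) : ℂ) := by push_cast; ring
    rw [h2, Complex.Gamma_ofReal, Complex.Gamma_ofReal, ← Complex.ofReal_mul,
      ← Complex.ofReal_mul] at h
    exact_mod_cast h
  -- lower bound on I via symmetry and pointwise comparison
  have hhalf : IntervalIntegrable f volume 0 (1/2) :=
    hf_int.mono_set (by rw [Set.uIcc_of_le, Set.uIcc_of_le] <;> norm_num <;>
      exact Set.Icc_subset_Icc le_rfl (by norm_num))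
  have hhalf' : IntervalIntegrable f volume (1/2) 1 :=
    hf_int.mono_set (by rw [Set.uIcc_of_le, Set.uIcc_of_le] <;> norm_num <;>
      exact Set.Icc_subset_Icc (by norm_num) le_rfl)
  have hsym : ∫ t in (1/2 : ℝ)..1, f t = ∫ t in (0:ℝ)..(1/2), f t := by
    have h := intervalIntegral.integral_comp_sub_left (a := (0:ℝ)) (b := 1/2) f 1
    simp only [show (1:ℝ) - 1/2 = 1/2 by norm_num, sub_zero] at h
    have e : (∫ x in (0:ℝ)..(1/2), f (1 - x)) = ∫ x in (0:ℝ)..(1/2), f x := by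
      refine intervalIntegral.integral_congr (fun t _ => ?_)
      simp only [hf, sub_sub_cancel]
      ring
    rw [e] at h
    exact h.symm
  have hIsplit : I = 2 * ∫ t in (0:ℝ)..(1/2), f t := by
    rw [hI, ← intervalIntegral.integral_add_adjacent_intervals hhalf hhalf', hsym]; ring
  have hg_int : IntervalIntegrable (fun t : ℝ => t ^ (ν - 1)) volume 0 (1/2) :=
    intervalIntegral.intervalIntegrable_rpow' (by linarith)
  have hmono : (∫ t in (0:ℝ)..(1/2), t ^ (ν - 1)) ≤ ∫ t in (0:ℝ)..(1/2), f t := by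
    refine intervalIntegral.integral_mono_on (by norm_num) hg_int hhalf (fun t ht => ?_)
    have h1t : 1 ≤ (1 - t) ^ (ν - 1) :=
      Real.one_le_rpow_of_pos_of_le_one_of_nonpos (by linarith [ht.2]) (by linarith [ht.1])
        (by linarith)
    calc t ^ (ν - 1) = t ^ (ν - 1) * 1 := (mul_one _).symm
      _ ≤ f t := mul_le_mul_of_nonneg_left h1t (Real.rpow_nonneg ht.1 _)
  have hgval : (∫ t in (0:ℝ)..(1/2), t ^ (ν - 1)) = (1/2 : ℝ) ^ ν / ν := by
    rw [integral_rpow (Or.inl (by linarith))]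
    have : ν - 1 + 1 = ν := by ring
    rw [this, Real.zero_rpow h0.ne']
    ring
  have hpow : (1/2 : ℝ) < (1/2 : ℝ) ^ ν := by
    have := Real.rpow_lt_rpow_of_exponent_gt (x := (1/2:ℝ)) (by norm_num) (by norm_num) h1
    rwa [Real.rpow_one] at this
  have hIgt : 1 / ν < I := by
    rw [hIsplit]
    have hle : (1/2 : ℝ) ^ ν / ν ≤ ∫ t in (0:ℝ)..(1/2), f t := hgval ▸ hmono
    calc 1 / ν < (2 * (1/2 : ℝ) ^ ν) / ν := by gcongr; linarith
      _ = 2 * ((1/2 : ℝ) ^ ν / ν) := by ring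
      _ ≤ 2 * ∫ t in (0:ℝ)..(1/2), f t := by linarith
  have hA : 0 < Real.Gamma (2 * ν) := Real.Gamma_pos_of_pos (by linarith)
  have hνI : 1 < I * ν := (div_lt_iff₀ h0).mp hIgt
  have hstep : Real.Gamma (2 * ν) * 1 < Real.Gamma (2 * ν) * (I * ν) :=
    mul_lt_mul_of_pos_left hνI hA
  nlinarith [hstep, hbeta, pow_two (Real.Gamma ν)]

/-- For all ν ∈ (0,1), Z(ν) := (1/ν)·(1/Γ(2ν) − 1/(ν·Γ(ν)²)) > 0, and Z(1) = 0. -/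
theorem Z_pos_and_Z_one_eq_zero
    (Z : ℝ → ℝ)
    (hZ : ∀ ν : ℝ, Z ν = (1 / ν) * (1 / Real.Gamma (2 * ν) - 1 / (ν * (Real.Gamma ν) ^ 2))) :
    (∀ ν : ℝ, ν ∈ Set.Ioo (0 : ℝ) 1 → 0 < Z ν) ∧ Z 1 = 0 := by
  constructor
  · rintro ν ⟨h0, h1⟩
    have hkey := Gamma_two_mul_lt h0 h1
    have hA : 0 < Real.Gamma (2 * ν) := Real.Gamma_pos_of_pos (by linarith)
    have hB : 0 < ν * Real.Gamma ν ^ 2 := by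
      have := Real.Gamma_pos_of_pos h0
      positivity
    have hlt : 1 / (ν * Real.Gamma ν ^ 2) < 1 / Real.Gamma (2 * ν) :=
      one_div_lt_one_div_of_lt hA hkey
    rw [hZ]
    have : 0 < 1 / ν := by positivity
    nlinarith
  · rw [hZ]
    norm_num [Real.Gamma_one, Real.Gamma_two]
end

section
/- Let q_k = −(1−p)^k/(k·log p) for k ≥ 1 be the logarithmic distribution with parameter p ∈ (0,1). Then its n-fold convolution satisfies q_k^{*n} = (n!/(−log p)^n)·((1−p)^k·|s(k,n)|/k!) for all integers k ≥ n ≥ 1, where |s(k,n)| are the unsigned Stirling numbers of the first kind. -/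
/-- n-fold convolution power of a probability mass function on ℕ. -/
def convPow (q : ℕ → ℝ) : ℕ → ℕ → ℝ
  | 0, k => if k = 0 then 1 else 0
  | n + 1, k => ∑ i ∈ Finset.range (k + 1), q i * convPow q n (k - i)

/-- Unsigned Stirling numbers of the first kind, via the recurrence
|s(k+1,n)| = k·|s(k,n)| + |s(k,n−1)|, |s(0,0)| = 1. They satisfy
x(x+1)⋯(x+k−1) = Σ_n |s(k,n)| xⁿ. -/
def stirlingFirst : ℕ → ℕ → ℕ
  | 0, 0 => 1
  | 0, _ + 1 => 0
  | _ + 1, 0 => 0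
  | k + 1, n + 1 => k * stirlingFirst k (n + 1) + stirlingFirst k n

noncomputable def gS (k n : ℕ) : ℝ :=
  (n.factorial : ℝ) * (stirlingFirst k n : ℝ) / (k.factorial : ℝ)

lemma stirling_succ (k n : ℕ) :
    stirlingFirst (k+1) (n+1) = k * stirlingFirst k (n+1) + stirlingFirst k n := rfl

lemma stirling_right_zero (k : ℕ) : stirlingFirst (k+1) 0 = 0 := rfl

lemma stirling_left_zero (n : ℕ) : stirlingFirst 0 (n+1) = 0 := rfl

lemma gS_right_zero (k : ℕ) : gS (k+1) 0 = 0 := by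
  simp [gS, stirling_right_zero]

lemma gS_left_zero (n : ℕ) : gS 0 (n+1) = 0 := by
  simp [gS, stirling_left_zero]

lemma gS_rec (j n : ℕ) :
    ((j:ℝ)+1) * gS (j+1) n = (j:ℝ) * gS j n + (n:ℝ) * gS j (n-1) := by
  cases n with
  | zero =>
    rw [gS_right_zero]
    cases j with
    | zero => simp
    | succ m => rw [gS_right_zero]; simp
  | succ m =>
    unfold gS
    rw [stirling_succ]
    have h1 : ((j+1).factorial : ℝ) = ((j:ℝ)+1) * (j.factorial : ℝ) := by
      rw [Nat.factorial_succ]; push_cast; ring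
    have h2 : ((m+1).factorial : ℝ) = ((m:ℝ)+1) * (m.factorial : ℝ) := by
      rw [Nat.factorial_succ]; push_cast; ring
    have hjf : (j.factorial : ℝ) ≠ 0 := Nat.cast_ne_zero.mpr (Nat.factorial_ne_zero j)
    have hj1 : ((j:ℝ)+1) ≠ 0 := by positivity
    simp only [Nat.add_sub_cancel]
    rw [h1, h2]
    push_cast
    field_simp

/-- The key combinatorial identity, phrased coefficient-wise. -/
lemma gS_key (n : ℕ)
    (hM : ∀ k, (n:ℝ) * (∑ j ∈ Finset.range k, ((k:ℝ) - (j:ℝ))⁻¹ * gS j (n-1))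
        = (n:ℝ) * gS k n) :
    ∀ k, (∑ j ∈ Finset.range k, ((k:ℝ) - (j:ℝ))⁻¹ * gS j n) = gS k (n+1) := by
  intro k
  induction k with
  | zero => simp [gS_left_zero]
  | succ k IH =>
    have hk1 : ((k:ℝ)+1) ≠ 0 := by positivity
    apply mul_left_cancel₀ hk1
    have hrec : ((k:ℝ)+1) * gS (k+1) (n+1)
        = (k:ℝ) * gS k (n+1) + ((n:ℝ)+1) * gS k n := by
      have h := gS_rec k (n+1)
      simpa [Nat.add_sub_cancel] using h
    rw [hrec, ← IH]
    -- abbreviations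
    set B := ∑ j ∈ Finset.range k, ((k:ℝ) - (j:ℝ))⁻¹ * ((j:ℝ) * gS j n) with hB
    set C := ∑ j ∈ Finset.range k, gS j n with hC
    set D := ∑ j ∈ Finset.range k, ((k:ℝ) - (j:ℝ))⁻¹ * gS j (n-1) with hD
    have hR : (k:ℝ) * (∑ j ∈ Finset.range k, ((k:ℝ) - (j:ℝ))⁻¹ * gS j n) = C + B := by
      rw [Finset.mul_sum]
      rw [hC, hB, ← Finset.sum_add_distrib]
      apply Finset.sum_congr rfl
      intro j hj
      have hjk : (j:ℝ) < (k:ℝ) := by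
        exact_mod_cast Finset.mem_range.mp hj
      have hne : ((k:ℝ) - (j:ℝ)) ≠ 0 := by linarith
      have h2 : ((k:ℝ) - (j:ℝ)) * ((k:ℝ) - (j:ℝ))⁻¹ = 1 := mul_inv_cancel₀ hne
      linear_combination gS j n * h2
    have hL : ((k:ℝ)+1) * (∑ j ∈ Finset.range (k+1), ((↑(k+1):ℝ) - (j:ℝ))⁻¹ * gS j n)
        = (C + gS k n) + (B + (n:ℝ) * gS k n) := by
      rw [Finset.mul_sum]
      have step1 : ∀ j ∈ Finset.range (k+1),
          ((k:ℝ)+1) * (((↑(k+1):ℝ) - (j:ℝ))⁻¹ * gS j n)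
            = gS j n + ((↑(k+1):ℝ) - (j:ℝ))⁻¹ * ((j:ℝ) * gS j n) := by
        intro j hj
        have hjk : (j:ℝ) < (k:ℝ)+1 := by
          have := Finset.mem_range.mp hj
          exact_mod_cast this
        have hne : ((↑(k+1):ℝ) - (j:ℝ)) ≠ 0 := by push_cast; linarith
        have h2 : ((↑(k+1):ℝ) - (j:ℝ)) * ((↑(k+1):ℝ) - (j:ℝ))⁻¹ = 1 := mul_inv_cancel₀ hne
        have hc : ((↑(k+1):ℝ)) = (k:ℝ)+1 := by push_cast; ring
        rw [hc] at h2 ⊢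
        linear_combination gS j n * h2
      rw [Finset.sum_congr rfl step1, Finset.sum_add_distrib]
      have hfirst : (∑ j ∈ Finset.range (k+1), gS j n) = C + gS k n := by
        rw [Finset.sum_range_succ, hC]
      have hsecond : (∑ j ∈ Finset.range (k+1), ((↑(k+1):ℝ) - (j:ℝ))⁻¹ * ((j:ℝ) * gS j n))
          = B + (n:ℝ) * gS k n := by
        rw [Finset.sum_range_succ'
          (f := fun j => ((↑(k+1):ℝ) - (j:ℝ))⁻¹ * ((j:ℝ) * gS j n)) k]
        simp only [Nat.cast_zero, zero_mul, mul_zero, add_zero]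
        have step2 : ∀ j ∈ Finset.range k,
            ((↑(k+1):ℝ) - (↑(j+1):ℝ))⁻¹ * ((↑(j+1):ℝ) * gS (j+1) n)
              = ((k:ℝ) - (j:ℝ))⁻¹ * ((j:ℝ) * gS j n)
                  + (n:ℝ) * (((k:ℝ) - (j:ℝ))⁻¹ * gS j (n-1)) := by
          intro j hj
          have hcast : ((↑(k+1):ℝ) - (↑(j+1):ℝ)) = (k:ℝ) - (j:ℝ) := by push_cast; ring
          have hrecj : ((↑(j+1):ℝ)) * gS (j+1) n
              = (j:ℝ) * gS j n + (n:ℝ) * gS j (n-1) := by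
            have := gS_rec j n
            push_cast
            linarith [this]
          rw [hcast, hrecj]
          ring
        rw [Finset.sum_congr rfl step2, Finset.sum_add_distrib, hB,
          ← Finset.mul_sum, ← hD, hM k]
      rw [hfirst, hsecond]
    rw [hL, hR]
    ring

lemma gS_conv (n : ℕ) :
    ∀ k, (∑ j ∈ Finset.range k, ((k:ℝ) - (j:ℝ))⁻¹ * gS j n) = gS k (n+1) := by
  induction n with
  | zero =>
    apply gS_key
    intro k
    simp
  | succ m IH =>
    apply gS_key
    intro k
    simp only [Nat.add_sub_cancel]
    rw [IH k]

lemma convPow_closed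
    (p : ℝ) (hp : p ∈ Set.Ioo (0 : ℝ) 1)
    (q : ℕ → ℝ) (hq0 : q 0 = 0)
    (hq : ∀ k : ℕ, 1 ≤ k → q k = -((1 - p) ^ k) / (k * Real.log p)) :
    ∀ n k : ℕ, convPow q n k = (1-p)^k / (-Real.log p)^n * gS k n := by
  have hlog : Real.log p < 0 := Real.log_neg hp.1 hp.2
  set c : ℝ := -Real.log p with hc
  have hcpos : 0 < c := by simp [hc]; linarith
  intro n
  induction n with
  | zero =>
    intro k
    cases k with
    | zero => simp [convPow, gS, show stirlingFirst 0 0 = 1 from rfl]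
    | succ m => simp [convPow, gS_right_zero]
  | succ n IH =>
    intro k
    show (∑ i ∈ Finset.range (k + 1), q i * convPow q n (k - i)) = _
    rw [Finset.sum_range_succ' (f := fun i => q i * convPow q n (k - i)) k]
    rw [hq0, zero_mul, add_zero]
    have step : ∀ i ∈ Finset.range k,
        q (i+1) * convPow q n (k - (i+1))
          = (1-p)^k / c^(n+1) * ((((i:ℝ))+1)⁻¹ * gS (k-(i+1)) n) := by
      intro i hi
      have hik : i < k := Finset.mem_range.mp hi
      rw [hq (i+1) (Nat.le_add_left 1 i), IH (k - (i+1))]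
      have hpow : (1-p)^(i+1) * (1-p)^(k-(i+1)) = (1-p)^k := by
        rw [← pow_add]
        congr 1
        omega
      have hi1 : ((↑(i+1):ℝ)) ≠ 0 := by positivity
      have hcne : c ≠ 0 := ne_of_gt hcpos
      have hlne : Real.log p ≠ 0 := ne_of_lt hlog
      have hq1 : -((1 - p) ^ (i+1)) / ((↑(i+1):ℝ) * Real.log p)
          = (1-p)^(i+1) * ((↑(i+1):ℝ))⁻¹ * c⁻¹ := by
        rw [hc]
        field_simp
      rw [hq1]
      have hcast : ((↑(i+1):ℝ)) = (i:ℝ)+1 := by push_cast; ring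
      rw [hcast] at *
      rw [← hpow]
      have hcn : c^(n+1) = c^n * c := by ring
      field_simp
      ring
    rw [Finset.sum_congr rfl step, ← Finset.mul_sum]
    have hreflect : (∑ i ∈ Finset.range k, (((i:ℝ))+1)⁻¹ * gS (k-(i+1)) n)
        = ∑ j ∈ Finset.range k, ((k:ℝ) - (j:ℝ))⁻¹ * gS j n := by
      rw [← Finset.sum_range_reflect (f := fun j => ((k:ℝ) - (j:ℝ))⁻¹ * gS j n) k]
      apply Finset.sum_congr rfl
      intro j hj
      have hjk : j < k := Finset.mem_range.mp hj
      have h1 : (k : ℝ) - (↑(k-1-j):ℝ) = (j:ℝ)+1 := by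
        have : ((k-1-j : ℕ):ℝ) = (k:ℝ) - 1 - (j:ℝ) := by
          have hj1 : 1 + j ≤ k := by omega
          rw [Nat.sub_sub, Nat.cast_sub hj1]
          push_cast
          ring
        rw [this]; ring
      have h2 : k - 1 - j = k - (j+1) := by omega
      rw [h1, h2]
    rw [hreflect, gS_conv n k]

/-- The n-fold convolution of the logarithmic pmf q_k = −(1−p)^k/(k·log p) is
q_k^{*n} = (n!/(−log p)^n)·((1−p)^k·|s(k,n)|/k!) for k ≥ n ≥ 1. -/
theorem logarithmic_convolution
    (p : ℝ) (hp : p ∈ Set.Ioo (0 : ℝ) 1)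
    (q : ℕ → ℝ) (hq0 : q 0 = 0)
    (hq : ∀ k : ℕ, 1 ≤ k → q k = -((1 - p) ^ k) / (k * Real.log p)) :
    ∀ n k : ℕ, 1 ≤ n → n ≤ k →
      convPow q n k
        = ((n.factorial : ℝ) / (-Real.log p) ^ n)
            * ((1 - p) ^ k * (stirlingFirst k n : ℝ) / (k.factorial : ℝ)) := by
  intro n k hn hk
  rw [convPow_closed p hp q hq0 hq n k]
  unfold gS
  ring
end

section
/- Let μ, β > 0 and ν > 1. The function g(t) = (βμ^{1/ν}t/ν)·e^{−μ^{1/ν}t} satisfies μ·e^{−μ^{1/ν}t} − (1/β)·(μ − D^ν)g(t) = 0 for all t ≥ 0, where D^ν is the right-sided Riemann–Liouville derivative on ℝ₊ of order ν (which satisfies D^ν e^{−at} = a^ν e^{−at} and commutes with differentiation in the parameter a). -/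
/-- The function g(t) = (βμ^{1/ν}t/ν)e^{−μ^{1/ν}t} satisfies the boundary relation
μe^{−μ^{1/ν}t} − (1/β)(μ − D^ν)g(t) = 0, where D^ν is the right-sided Riemann–Liouville
derivative of order ν > 1, characterized here by D^ν e^{−at} = a^ν e^{−at} and commutation
with differentiation in the parameter a. -/
theorem boundary_relation_generalized_polya_aeppli
    (ν μ β : ℝ) (hν : 1 < ν) (hμ : 0 < μ) (hβ : 0 < β)
    (D : (ℝ → ℝ) →ₗ[ℝ] (ℝ → ℝ))
    -- D^ν acts on exponentials as D^ν e^{−at} = a^ν e^{−at}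
    (hDexp : ∀ a : ℝ, 0 < a → D (fun s => Real.exp (-a * s)) = fun t => a ^ ν * Real.exp (-a * t))
    -- D^ν commutes with differentiation in the parameter a (applied at a = μ^{1/ν}):
    -- since t e^{−at} = −(d/da) e^{−at}, we get D(t e^{−at})(t) = −(d/da)[a^ν e^{−at}]
    (hDcomm : ∀ t : ℝ,
      D (fun s => s * Real.exp (-(μ ^ ((1 : ℝ) / ν)) * s)) t
        = -(deriv (fun a : ℝ => a ^ ν * Real.exp (-a * t)) (μ ^ ((1 : ℝ) / ν))))
    (g : ℝ → ℝ)
    (hg : ∀ t : ℝ, g t = β * μ ^ ((1 : ℝ) / ν) * t / ν * Real.exp (-(μ ^ ((1 : ℝ) / ν)) * t)) :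
    ∀ t : ℝ, 0 ≤ t →
      μ * Real.exp (-(μ ^ ((1 : ℝ) / ν)) * t) - (1 / β) * (μ * g t - D g t) = 0 := by
  intro t ht
  set a : ℝ := μ ^ ((1 : ℝ) / ν) with ha_def
  have hν0 : ν ≠ 0 := by linarith
  have ha : 0 < a := Real.rpow_pos_of_pos hμ _
  have haν : a ^ ν = μ := by
    rw [ha_def, ← Real.rpow_mul hμ.le, one_div_mul_cancel hν0, Real.rpow_one]
  -- derivative computation
  have h1 : HasDerivAt (fun x : ℝ => x ^ ν) (ν * a ^ (ν - 1)) a :=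
    Real.hasDerivAt_rpow_const (Or.inl ha.ne')
  have h2 : HasDerivAt (fun x : ℝ => Real.exp (-x * t)) (-t * Real.exp (-a * t)) a := by
    have hin : HasDerivAt (fun x : ℝ => -x * t) (-1 * t) a :=
      (hasDerivAt_id a).neg.mul_const t
    have := (Real.hasDerivAt_exp (-a * t)).comp a hin
    rw [show -t * Real.exp (-a * t) = Real.exp (-a * t) * (-1 * t) by ring]
    exact this
  have hD : HasDerivAt (fun x : ℝ => x ^ ν * Real.exp (-x * t))
      (ν * a ^ (ν - 1) * Real.exp (-a * t) + a ^ ν * (-t * Real.exp (-a * t))) a := h1.mul h2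
  have hderiv : deriv (fun x : ℝ => x ^ ν * Real.exp (-x * t)) a
      = ν * a ^ (ν - 1) * Real.exp (-a * t) + a ^ ν * (-t * Real.exp (-a * t)) := hD.deriv
  -- express g as scalar multiple
  have hgf : g = (β * a / ν) • (fun s : ℝ => s * Real.exp (-a * s)) := by
    funext s
    rw [hg s]
    simp [Pi.smul_apply, smul_eq_mul]
    ring
  have hDg : D g t = (β * a / ν) * D (fun s : ℝ => s * Real.exp (-a * s)) t := by
    rw [hgf, map_smul]
    simp [Pi.smul_apply, smul_eq_mul]
  have key : D g t = (β * a / ν) *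
      (-(ν * a ^ (ν - 1) * Real.exp (-a * t) + a ^ ν * (-t * Real.exp (-a * t)))) := by
    rw [hDg, hDcomm t, hderiv]
  have haν1 : a * a ^ (ν - 1) = μ := by
    have h : a ^ ν = a ^ (1 + (ν - 1)) := by ring_nf
    rw [← haν, h, Real.rpow_add ha, Real.rpow_one]
  rw [key, hg t, haν]
  field_simp
  linear_combination (-(Real.exp (-(a * t)) * ν)) * haν1
end

section
/- Let ν ∈ (0,1), μ, β > 0. Define f(t) := μβ t^ν E_{ν,ν+1}^2(−μ t^ν) where E_{α,β}^γ(x) = Σ_{j≥0} (γ)^{(j)} x^j/(j!·Γ(αj+β)) is the generalized Mittag-Leffler function and (γ)^{(j)} the rising factorial. Then f(t) = −β Σ_{j≥0} j(−μ t^ν)^j/Γ(νj+1), and −μ E_{ν,1}(−μ t^ν) + (1/β)(μ + d_C^ν/dt^ν) f(t) = 0 for all t > 0. -/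
open Real Set Filter MeasureTheory

/-- The Caputo fractional derivative of order ν ∈ (0,1). -/
noncomputable def caputoDeriv (ν : ℝ) (f : ℝ → ℝ) (t : ℝ) : ℝ :=
  (1 / Real.Gamma (1 - ν)) * ∫ s in (0 : ℝ)..t, (t - s) ^ (-ν) * deriv f s

lemma aux_gamma_le {ν y : ℝ} (hν0 : 0 < ν) (hν1 : ν < 1) (hy : 1 ≤ y) :
    Real.Gamma y * (y + ν - 1) ^ ν ≤ Real.Gamma (y + ν) := by
  have h1 : (0:ℝ) < y + ν - 1 := by linarith
  have h2 : (0:ℝ) < y + ν := by linarith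
  have hyp : (0:ℝ) < y := by linarith
  have hc := Real.convexOn_log_Gamma.2 (Set.mem_Ioi.2 h1) (Set.mem_Ioi.2 h2)
    hν0.le (by linarith : (0:ℝ) ≤ 1 - ν) (by ring)
  simp only [smul_eq_mul, Function.comp_apply] at hc
  have hcomb : ν * (y + ν - 1) + (1 - ν) * (y + ν) = y := by ring
  rw [hcomb] at hc
  have hrec : Real.Gamma (y + ν) = (y + ν - 1) * Real.Gamma (y + ν - 1) := by
    have := Real.Gamma_add_one h1.ne'
    rw [show y + ν - 1 + 1 = y + ν by ring] at this
    exact this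
  have hlog : Real.log (Real.Gamma (y + ν - 1)) =
      Real.log (Real.Gamma (y + ν)) - Real.log (y + ν - 1) := by
    rw [hrec, Real.log_mul h1.ne' (Real.Gamma_pos_of_pos h1).ne']; ring
  rw [hlog] at hc
  have key : Real.log (Real.Gamma y) + ν * Real.log (y + ν - 1) ≤
      Real.log (Real.Gamma (y + ν)) := by linarith
  calc Real.Gamma y * (y + ν - 1) ^ ν
      = Real.exp (Real.log (Real.Gamma y) + ν * Real.log (y + ν - 1)) := by
        rw [Real.exp_add, Real.exp_log (Real.Gamma_pos_of_pos hyp),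
          ← Real.log_rpow h1, Real.exp_log (Real.rpow_pos_of_pos h1 ν)]
    _ ≤ Real.exp (Real.log (Real.Gamma (y + ν))) := Real.exp_le_exp.2 key
    _ = Real.Gamma (y + ν) := Real.exp_log (Real.Gamma_pos_of_pos h2)

lemma summable_master {ν b x : ℝ} (hν0 : 0 < ν) (hν1 : ν < 1) (hb : 0 < b) (hx : 0 ≤ x)
    (k : ℕ) : Summable (fun j : ℕ => (j + 1 : ℝ) ^ k * x ^ j / Real.Gamma (ν * j + b)) := by
  apply summable_of_ratio_norm_eventually_le (r := 1/2) (by norm_num)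
  have htend : Tendsto (fun j : ℕ => (ν * j + b + ν - 1) ^ ν) atTop atTop := by
    apply (tendsto_rpow_atTop hν0).comp
    have base := tendsto_atTop_add_const_right atTop (b + ν - 1)
      (tendsto_natCast_atTop_atTop.const_mul_atTop hν0)
    exact base.congr (fun j => by ring)
  have h1 : ∀ᶠ j : ℕ in atTop, 2 * (2 ^ k * x) + 1 ≤ (ν * j + b + ν - 1) ^ ν :=
    htend.eventually_ge_atTop _
  have h2 : ∀ᶠ j : ℕ in atTop, 1 ≤ ν * j + b := by
    have : Tendsto (fun j : ℕ => ν * j + b) atTop atTop :=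
      tendsto_atTop_add_const_right _ b (tendsto_natCast_atTop_atTop.const_mul_atTop hν0)
    exact this.eventually_ge_atTop _
  filter_upwards [h1, h2] with j hA hy
  set y := ν * (j : ℝ) + b with hydef
  have hy0 : (0:ℝ) < y := by linarith
  have hyν : (0:ℝ) < y + ν - 1 := by linarith
  have hG : 0 < Real.Gamma y := Real.Gamma_pos_of_pos hy0
  have hG' : 0 < Real.Gamma (y + ν) := Real.Gamma_pos_of_pos (by linarith)
  set A := (y + ν - 1) ^ ν with hAdef
  have hA0 : 0 < A := Real.rpow_pos_of_pos hyν ν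
  have haux : Real.Gamma y * A ≤ Real.Gamma (y + ν) := aux_gamma_le hν0 hν1 hy
  have hcast : ν * ((j : ℕ) + 1 : ℕ) + b = y + ν := by push_cast; ring
  rw [Real.norm_of_nonneg (by positivity), Real.norm_of_nonneg (by positivity)]
  push_cast
  rw [show ν * ((j:ℝ) + 1) + b = y + ν by ring]
  rw [div_le_iff₀ hG']
  have hAx : (2:ℝ) ^ k * x ≤ A / 2 := by nlinarith [hA0]
  calc ((j:ℝ) + 1 + 1) ^ k * x ^ (j + 1)
      = (((j:ℝ) + 1 + 1) ^ k * x) * x ^ j := by ring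
    _ ≤ ((2 * ((j:ℝ) + 1)) ^ k * x) * x ^ j := by
        have : ((j:ℝ) + 1 + 1) ^ k ≤ (2 * ((j:ℝ) + 1)) ^ k := by
          gcongr
          nlinarith [(Nat.cast_nonneg j : (0:ℝ) ≤ (j:ℝ))]
        have hx' : 0 ≤ x ^ j := by positivity
        exact mul_le_mul_of_nonneg_right (mul_le_mul_of_nonneg_right this hx) hx'
    _ = (((j:ℝ) + 1) ^ k * x ^ j) * (2 ^ k * x) := by rw [mul_pow]; ring
    _ ≤ (((j:ℝ) + 1) ^ k * x ^ j) * (A / 2) := by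
        apply mul_le_mul_of_nonneg_left hAx (by positivity)
    _ = (1/2) * (((j:ℝ) + 1) ^ k * x ^ j) * A := by ring
    _ ≤ (1/2) * (((j:ℝ) + 1) ^ k * x ^ j) * (Real.Gamma (y + ν) / Real.Gamma y) := by
        apply mul_le_mul_of_nonneg_left _ (by positivity)
        rw [le_div_iff₀ hG]; linarith [haux]
    _ = 1/2 * (((j:ℝ) + 1) ^ k * x ^ j / Real.Gamma y) * Real.Gamma (y + ν) := by
        field_simp

lemma summable_compare {ν b x : ℝ} (C : ℝ) (hν0 : 0 < ν) (hν1 : ν < 1) (hb : 0 < b) (hx : 0 ≤ x)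
    (k : ℕ) {g : ℕ → ℝ}
    (hg : ∀ j : ℕ, ‖g j‖ ≤ C * ((j + 1 : ℝ) ^ k * x ^ j / Real.Gamma (ν * j + b))) :
    Summable g :=
  Summable.of_norm_bounded ((summable_master hν0 hν1 hb hx k).mul_left C) hg

lemma summable_S2 {ν x : ℝ} (hν0 : 0 < ν) (hν1 : ν < 1) (hx : 0 ≤ x) :
    Summable (fun j : ℕ => (j : ℝ) * (-x) ^ j / Real.Gamma (ν * j + 1)) := by
  refine summable_compare 1 hν0 hν1 one_pos hx 1 (fun j => ?_)
  have hG : 0 < Real.Gamma (ν * j + 1) := Real.Gamma_pos_of_pos (by positivity)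
  rw [Real.norm_eq_abs, abs_div, abs_of_pos hG, abs_mul, abs_pow, abs_neg,
    abs_of_nonneg hx, abs_of_nonneg (Nat.cast_nonneg j : (0:ℝ) ≤ (j:ℝ)), one_mul, pow_one]
  gcongr
  linarith

lemma summable_E {ν x : ℝ} (hν0 : 0 < ν) (hν1 : ν < 1) (hx : 0 ≤ x) :
    Summable (fun j : ℕ => (-x) ^ j / Real.Gamma (ν * j + 1)) := by
  refine summable_compare 1 hν0 hν1 one_pos hx 0 (fun j => ?_)
  have hG : 0 < Real.Gamma (ν * j + 1) := Real.Gamma_pos_of_pos (by positivity)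
  rw [Real.norm_eq_abs, abs_div, abs_of_pos hG, abs_pow, abs_neg, abs_of_nonneg hx, pow_zero, one_mul]
  rw [one_mul]


lemma series_transform {ν : ℝ} (hν0 : 0 < ν) (hν1 : ν < 1) (β : ℝ) {x : ℝ} (hx : 0 < x) :
    β * (x * ∑' j : ℕ, (Nat.ascFactorial 2 j : ℝ) * (-x) ^ j
        / ((j.factorial : ℝ) * Real.Gamma (ν * j + ν + 1)))
      = -β * ∑' j : ℕ, (j : ℝ) * (-x) ^ j / Real.Gamma (ν * j + 1) := by
  have hasc : ∀ j : ℕ, (Nat.ascFactorial 2 j : ℝ) = ((j : ℝ) + 1) * (j.factorial : ℝ) := by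
    intro j
    have h := Nat.factorial_mul_ascFactorial 1 j
    rw [Nat.factorial_one, one_mul, Nat.add_comm 1 j, Nat.factorial_succ] at h
    rw [h]; push_cast; ring
  have hterm : ∀ j : ℕ, (Nat.ascFactorial 2 j : ℝ) * (-x) ^ j
      / ((j.factorial : ℝ) * Real.Gamma (ν * j + ν + 1))
      = ((j : ℝ) + 1) * (-x) ^ j / Real.Gamma (ν * j + ν + 1) := by
    intro j
    have hG : Real.Gamma (ν * j + ν + 1) ≠ 0 :=
      (Real.Gamma_pos_of_pos (by positivity)).ne'
    have hF : (j.factorial : ℝ) ≠ 0 := Nat.cast_ne_zero.2 j.factorial_ne_zero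
    rw [hasc j]
    field_simp
  rw [tsum_congr hterm]
  calc β * (x * ∑' j : ℕ, ((j : ℝ) + 1) * (-x) ^ j / Real.Gamma (ν * j + ν + 1))
      = β * ∑' j : ℕ, x * (((j : ℝ) + 1) * (-x) ^ j / Real.Gamma (ν * j + ν + 1)) := by
        rw [tsum_mul_left]
    _ = β * ∑' j : ℕ, -((((j + 1 : ℕ)) : ℝ) * (-x) ^ (j + 1)
          / Real.Gamma (ν * ((j + 1 : ℕ) : ℝ) + 1)) := by
        congr 1
        apply tsum_congr
        intro j
        have harg : ν * (((j + 1 : ℕ)) : ℝ) + 1 = ν * j + ν + 1 := by push_cast; ring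
        rw [harg, pow_succ]
        push_cast
        ring
    _ = -β * ∑' j : ℕ, ((((j + 1 : ℕ)) : ℝ) * (-x) ^ (j + 1)
          / Real.Gamma (ν * ((j + 1 : ℕ) : ℝ) + 1)) := by
        rw [tsum_neg]; ring
    _ = -β * ∑' j : ℕ, (j : ℝ) * (-x) ^ j / Real.Gamma (ν * j + 1) := by
        congr 1
        rw [Summable.tsum_eq_zero_add (summable_S2 hν0 hν1 hx.le)]
        simp only [Nat.cast_zero, zero_mul, zero_div, zero_add]

lemma hasDerivAt_f {ν μ β : ℝ} (hν0 : 0 < ν) (hν1 : ν < 1) (hμ : 0 < μ) (hβ : 0 < β)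
    (f : ℝ → ℝ)
    (hfs : ∀ u : ℝ, 0 < u →
      f u = ∑' j : ℕ, (-β * ((j : ℝ) * (-μ) ^ j / Real.Gamma (ν * j + 1))) * u ^ (ν * (j : ℝ)))
    {s : ℝ} (hs : 0 < s) :
    HasDerivAt f (∑' j : ℕ, (-β * ((j : ℝ) * (-μ) ^ j / Real.Gamma (ν * j + 1)))
      * (ν * (j : ℝ) * s ^ (ν * (j : ℝ) - 1))) s := by
  set C : ℕ → ℝ := fun j => -β * ((j : ℝ) * (-μ) ^ j / Real.Gamma (ν * j + 1)) with hC
  set g : ℕ → ℝ → ℝ := fun j u => C j * u ^ (ν * (j : ℝ)) with hg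
  set g' : ℕ → ℝ → ℝ := fun j y => C j * (ν * (j : ℝ) * y ^ (ν * (j : ℝ) - 1)) with hg'
  set u : ℕ → ℝ := fun j =>
    (β * ν * (2 / s)) * (((j : ℝ) + 1) ^ 2 * (μ * (s + 1) ^ ν) ^ j / Real.Gamma (ν * j + 1))
    with hu
  have hXnn : (0:ℝ) ≤ μ * (s + 1) ^ ν := by positivity
  have hGpos : ∀ j : ℕ, 0 < Real.Gamma (ν * j + 1) :=
    fun j => Real.Gamma_pos_of_pos (by positivity)
  have hsum_u : Summable u := (summable_master hν0 hν1 one_pos hXnn 2).mul_left _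
  have hmem : s ∈ Set.Ioo (s/2) (s+1) := ⟨by linarith, by linarith⟩
  have hgd : ∀ (j : ℕ) (y : ℝ), y ∈ Set.Ioo (s/2) (s+1) → HasDerivAt (g j) (g' j y) y := by
    intro j y hy
    have hy0 : 0 < y := by have := hy.1; linarith
    exact (Real.hasDerivAt_rpow_const (Or.inl hy0.ne')).const_mul (C j)
  have hbound : ∀ (j : ℕ) (y : ℝ), y ∈ Set.Ioo (s/2) (s+1) → ‖g' j y‖ ≤ u j := by
    intro j y hy
    have hy0 : 0 < y := by have := hy.1; linarith
    have hG := hGpos j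
    have hnorm : ‖g' j y‖ = β * ν * (j:ℝ) * (j:ℝ) * μ ^ j * y ^ (ν * (j:ℝ) - 1)
        / Real.Gamma (ν * j + 1) := by
      rw [hg']
      rw [Real.norm_eq_abs, abs_mul,
        abs_of_nonneg (show (0:ℝ) ≤ ν * (j:ℝ) * y ^ (ν * (j:ℝ) - 1) by positivity),
        hC, abs_mul, abs_neg, abs_of_pos hβ, abs_div, abs_of_pos hG, abs_mul, abs_pow,
        abs_neg, abs_of_pos hμ, abs_of_nonneg (Nat.cast_nonneg j : (0:ℝ) ≤ (j:ℝ))]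
      ring
    rw [hnorm]
    have hyb : y ^ (ν * (j:ℝ) - 1) ≤ ((s+1) ^ ν) ^ j * (2 / s) := by
      rw [Real.rpow_sub_one hy0.ne', div_eq_mul_inv]
      have h2 : y ^ (ν * (j:ℝ)) ≤ ((s+1) ^ ν) ^ j := by
        rw [← Real.rpow_natCast ((s+1) ^ ν) j, ← Real.rpow_mul (by positivity : (0:ℝ) ≤ s+1)]
        exact Real.rpow_le_rpow hy0.le (by linarith [hy.2]) (by positivity)
      have h3 : y⁻¹ ≤ (2 / s)⁻¹⁻¹ := by
        rw [inv_inv]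
        rw [show (2 / s : ℝ) = (s / 2)⁻¹ by field_simp]
        exact inv_anti₀ (by linarith) (le_of_lt hy.1)
      rw [inv_inv] at h3
      exact mul_le_mul h2 h3 (by positivity) (by positivity)
    calc β * ν * (j:ℝ) * (j:ℝ) * μ ^ j * y ^ (ν * (j:ℝ) - 1) / Real.Gamma (ν * j + 1)
        ≤ β * ν * (j:ℝ) * (j:ℝ) * μ ^ j * (((s+1) ^ ν) ^ j * (2 / s))
          / Real.Gamma (ν * j + 1) := by gcongr
      _ ≤ β * ν * ((j:ℝ)+1) * ((j:ℝ)+1) * μ ^ j * (((s+1) ^ ν) ^ j * (2 / s))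
          / Real.Gamma (ν * j + 1) := by
          gcongr <;> linarith [(Nat.cast_nonneg j : (0:ℝ) ≤ (j:ℝ))]
      _ = u j := by
          rw [hu]
          simp only [mul_pow]
          field_simp
  have hg0 : Summable (fun j => g j s) := by
    refine summable_compare β hν0 hν1 one_pos (by positivity : (0:ℝ) ≤ μ * s ^ ν) 1 (fun j => ?_)
    have hG := hGpos j
    have hnorm : ‖g j s‖ = β * (j:ℝ) * μ ^ j * s ^ (ν * (j:ℝ)) / Real.Gamma (ν * j + 1) := by
      rw [hg, Real.norm_eq_abs, abs_mul,
        abs_of_nonneg (Real.rpow_nonneg hs.le _),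
        hC, abs_mul, abs_neg, abs_of_pos hβ, abs_div, abs_of_pos hG, abs_mul, abs_pow,
        abs_neg, abs_of_pos hμ, abs_of_nonneg (Nat.cast_nonneg j : (0:ℝ) ≤ (j:ℝ))]
      ring
    rw [hnorm, pow_one]
    have hsp : s ^ (ν * (j:ℝ)) = (s ^ ν) ^ j := by
      rw [Real.rpow_mul hs.le, Real.rpow_natCast]
    rw [hsp, mul_pow]
    have : β * (j:ℝ) * μ ^ j * (s ^ ν) ^ j / Real.Gamma (ν * j + 1)
        = β * ((j:ℝ) * (μ ^ j * (s ^ ν) ^ j) / Real.Gamma (ν * j + 1)) := by ring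
    rw [this]
    gcongr
    linarith
  have key := hasDerivAt_tsum_of_isPreconnected hsum_u isOpen_Ioo isPreconnected_Ioo
    hgd hbound hmem hg0 hmem
  have heq : f =ᶠ[nhds s] (fun z => ∑' j, g j z) := by
    filter_upwards [Ioi_mem_nhds hs] with w hw
    exact hfs w hw
  exact key.congr_of_eventuallyEq heq

lemma beta_integrable {p q t : ℝ} (hp : 0 < p) (hq : 0 < q) (ht : 0 < t) :
    IntervalIntegrable (fun s => s ^ (p - 1) * (t - s) ^ (q - 1)) volume 0 t := by
  have ht2 : 0 < t / 2 := by linarith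
  have part1 : IntervalIntegrable (fun s => s ^ (p - 1) * (t - s) ^ (q - 1)) volume 0 (t/2) := by
    apply IntervalIntegrable.mul_continuousOn
    · exact intervalIntegral.intervalIntegrable_rpow' (by linarith)
    · apply ContinuousOn.rpow_const (continuous_const.sub continuous_id).continuousOn
      intro x hx
      rw [Set.uIcc_of_le (by linarith : (0:ℝ) ≤ t/2)] at hx
      exact Or.inl (by simp only [Pi.sub_apply, id]; cases hx with | intro h1 h2 => linarith)
  have part2 : IntervalIntegrable (fun s => s ^ (p - 1) * (t - s) ^ (q - 1)) volume (t/2) t := by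
    apply IntervalIntegrable.continuousOn_mul
    · have base : IntervalIntegrable (fun x : ℝ => x ^ (q - 1)) volume 0 (t/2) :=
        intervalIntegral.intervalIntegrable_rpow' (by linarith)
      have := base.comp_sub_left t
      rw [show t - t/2 = t/2 by ring, sub_zero] at this
      exact this.symm
    · apply ContinuousOn.rpow_const continuousOn_id
      intro x hx
      rw [Set.uIcc_of_le (by linarith : t/2 ≤ t)] at hx
      exact Or.inl (by simp only [id]; cases hx with | intro h1 h2 => linarith)
  exact part1.trans part2

lemma beta_value {p q t : ℝ} (hp : 0 < p) (hq : 0 < q) (ht : 0 < t) :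
    ∫ s in (0:ℝ)..t, s ^ (p - 1) * (t - s) ^ (q - 1)
      = t ^ (p + q - 1) * (Real.Gamma p * Real.Gamma q / Real.Gamma (p + q)) := by
  have hC := Complex.betaIntegral_scaled p q ht
  have hGpq : Complex.Gamma (p + q : ℂ) ≠ 0 := by
    rw [show ((p:ℂ) + q) = ((p + q : ℝ) : ℂ) by push_cast; ring, Complex.Gamma_ofReal]
    exact_mod_cast (Real.Gamma_pos_of_pos (by linarith)).ne'
  have hBeta : Complex.betaIntegral p q
      = Complex.Gamma p * Complex.Gamma q / Complex.Gamma (p + q) := by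
    have := Complex.Gamma_mul_Gamma_eq_betaIntegral
      (by simp [hp] : 0 < Complex.re p) (by simp [hq] : 0 < Complex.re q)
    field_simp [this]
    rw [this]; ring
  have hre : (∫ x in (0:ℝ)..t, (x:ℂ) ^ ((p:ℂ) - 1) * ((t:ℂ) - x) ^ ((q:ℂ) - 1))
      = ((∫ s in (0:ℝ)..t, s ^ (p - 1) * (t - s) ^ (q - 1) : ℝ) : ℂ) := by
    rw [← intervalIntegral.integral_ofReal]
    refine intervalIntegral.integral_congr fun x hx => ?_
    rw [Set.uIcc_of_le ht.le] at hx
    rw [Complex.ofReal_mul, Complex.ofReal_cpow hx.1, Complex.ofReal_cpow (by linarith [hx.2] : (0:ℝ) ≤ t - x)]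
    push_cast
    ring
  have h1 : ((∫ s in (0:ℝ)..t, s ^ (p - 1) * (t - s) ^ (q - 1) : ℝ) : ℂ)
      = ((t ^ (p + q - 1) * (Real.Gamma p * Real.Gamma q / Real.Gamma (p + q)) : ℝ) : ℂ) := by
    rw [← hre, hC, hBeta]
    rw [show ((p:ℂ) + q - 1) = ((p + q - 1 : ℝ) : ℂ) by push_cast; ring,
      ← Complex.ofReal_cpow ht.le,
      show ((p:ℂ)) = ((p:ℝ):ℂ) from rfl, show ((q:ℂ)) = ((q:ℝ):ℂ) from rfl,
      show ((p:ℂ) + (q:ℂ)) = ((p + q : ℝ) : ℂ) by push_cast; ring,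
      Complex.Gamma_ofReal, Complex.Gamma_ofReal, Complex.Gamma_ofReal]
    push_cast
    ring
  exact_mod_cast h1

lemma caputo_eq {ν μ β : ℝ} (hν0 : 0 < ν) (hν1 : ν < 1) (hμ : 0 < μ) (hβ : 0 < β)
    (f : ℝ → ℝ)
    (hfs : ∀ u : ℝ, 0 < u →
      f u = ∑' j : ℕ, (-β * ((j : ℝ) * (-μ) ^ j / Real.Gamma (ν * j + 1))) * u ^ (ν * (j : ℝ)))
    {t : ℝ} (ht : 0 < t) :
    caputoDeriv ν f t
      = ∑' j : ℕ, -β * (j : ℝ) * (-μ) ^ j * t ^ (ν * (j : ℝ) - ν)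
          / Real.Gamma (ν * (j : ℝ) - ν + 1) := by
  have hG1ν : 0 < Real.Gamma (1 - ν) := Real.Gamma_pos_of_pos (by linarith)
  have hGpos : ∀ j : ℕ, 0 < Real.Gamma (ν * j + 1) :=
    fun j => Real.Gamma_pos_of_pos (by positivity)
  set c : ℕ → ℝ := fun j =>
    -β * ((j : ℝ) * (-μ) ^ j / Real.Gamma (ν * j + 1)) * (ν * (j : ℝ)) with hc
  set F : ℕ → ℝ → ℝ := fun j s =>
    (t - s) ^ (-ν) * ((-β * ((j : ℝ) * (-μ) ^ j / Real.Gamma (ν * j + 1)))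
      * (ν * (j : ℝ) * s ^ (ν * (j : ℝ) - 1))) with hF
  have hFc : ∀ j : ℕ, F j = fun s => c j * (s ^ (ν * (j : ℝ) - 1) * (t - s) ^ ((1 - ν) - 1)) := by
    intro j
    funext s
    rw [hF, hc, show (1 - ν) - 1 = -ν by ring]
    ring
  have hF0 : F 0 = fun _ => 0 := by
    funext s
    rw [hFc 0, hc]
    push_cast
    ring
  -- integrability
  have hFint : ∀ j : ℕ, IntegrableOn (F j) (Set.Ioc 0 t) := by
    intro j
    rcases Nat.eq_zero_or_pos j with rfl | hj
    · rw [hF0]; exact integrable_zero _ _ _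
    · have hjpos : (0:ℝ) < ν * (j : ℝ) := by
        have : (0:ℝ) < (j:ℝ) := Nat.cast_pos.2 hj
        positivity
      have hbase := (beta_integrable hjpos (by linarith : (0:ℝ) < 1 - ν) ht).1
      rw [hFc j]
      exact hbase.const_mul (c j)
  -- pointwise norm
  have hFnorm : ∀ j : ℕ, ∀ s ∈ Set.Ioc (0:ℝ) t,
      ‖F j s‖ = |c j| * (s ^ (ν * (j : ℝ) - 1) * (t - s) ^ ((1 - ν) - 1)) := by
    intro j s hs
    rw [hFc j, Real.norm_eq_abs, abs_mul]
    congr 1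
    exact abs_of_nonneg (mul_nonneg (Real.rpow_nonneg hs.1.le _)
      (Real.rpow_nonneg (by linarith [hs.2]) _))
  -- norm integral values
  set W : ℕ → ℝ := fun j => ∫ s in Set.Ioc (0:ℝ) t, ‖F j s‖ with hW
  have hWnn : ∀ j, 0 ≤ W j := fun j => integral_nonneg (fun s => norm_nonneg _)
  have hWval : ∀ j : ℕ, 0 < j → W j = |c j| *
      (t ^ (ν * (j : ℝ) + (1 - ν) - 1)
        * (Real.Gamma (ν * (j : ℝ)) * Real.Gamma (1 - ν) / Real.Gamma (ν * (j : ℝ) + (1 - ν)))) := by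
    intro j hj
    have hjpos : (0:ℝ) < ν * (j : ℝ) := mul_pos hν0 (Nat.cast_pos.2 hj)
    show (∫ s in Set.Ioc (0:ℝ) t, ‖F j s‖) = _
    rw [setIntegral_congr_fun measurableSet_Ioc (hFnorm j)]
    rw [integral_const_mul, ← intervalIntegral.integral_of_le ht.le,
      beta_value hjpos (by linarith : (0:ℝ) < 1 - ν) ht]
  have hW0 : W 0 = 0 := by
    show (∫ s in Set.Ioc (0:ℝ) t, ‖F 0 s‖) = 0
    have : ∀ s ∈ Set.Ioc (0:ℝ) t, ‖F 0 s‖ = 0 := by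
      intro s hs; rw [hF0]; simp
    rw [setIntegral_congr_fun measurableSet_Ioc this]
    simp
  -- |c j| value
  have habsc : ∀ j : ℕ, |c j| = β * ((j:ℝ) * μ ^ j / Real.Gamma (ν * j + 1)) * (ν * (j:ℝ)) := by
    intro j
    rw [hc, abs_mul, abs_mul, abs_neg, abs_of_pos hβ, abs_div, abs_of_pos (hGpos j),
      abs_mul, abs_pow, abs_neg, abs_of_pos hμ,
      abs_of_nonneg (Nat.cast_nonneg j : (0:ℝ) ≤ (j:ℝ)),
      abs_of_nonneg (by positivity : (0:ℝ) ≤ ν * (j:ℝ))]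
  -- summability of W
  have hWsum : Summable W := by
    refine summable_compare (β * Real.Gamma (1 - ν) * t ^ (-ν)) hν0 hν1
      (by linarith : (0:ℝ) < 1 - ν) (by positivity : (0:ℝ) ≤ μ * t ^ ν) 1 (fun j => ?_)
    rcases Nat.eq_zero_or_pos j with rfl | hj
    · rw [Real.norm_eq_abs, hW0, abs_zero]
      have h0 : (0:ℝ) < Real.Gamma (ν * ((0:ℕ):ℝ) + (1 - ν)) :=
        Real.Gamma_pos_of_pos (by push_cast; linarith)
      positivity
    · have hjr : (0:ℝ) < (j:ℝ) := Nat.cast_pos.2 hj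
      have hjpos : (0:ℝ) < ν * (j : ℝ) := mul_pos hν0 hjr
      have hGj : 0 < Real.Gamma (ν * (j:ℝ)) := Real.Gamma_pos_of_pos hjpos
      have hGj2 : 0 < Real.Gamma (ν * (j:ℝ) + (1 - ν)) := Real.Gamma_pos_of_pos (by linarith)
      rw [Real.norm_eq_abs, abs_of_nonneg (hWnn j), hWval j hj, habsc j]
      have hGrec : Real.Gamma (ν * (j:ℝ) + 1) = (ν * (j:ℝ)) * Real.Gamma (ν * (j:ℝ)) :=
        Real.Gamma_add_one hjpos.ne'
      rw [hGrec]
      have hpow : t ^ (ν * (j:ℝ) + (1 - ν) - 1) = (t ^ ν) ^ j * t ^ (-ν) := by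
        rw [show ν * (j:ℝ) + (1 - ν) - 1 = ν * (j:ℝ) + (-ν) by ring,
          Real.rpow_add ht, Real.rpow_mul ht.le, Real.rpow_natCast]
      rw [hpow, pow_one]
      rw [mul_pow μ (t ^ ν) j]
      have heq : β * ((j:ℝ) * μ ^ j / ((ν * (j:ℝ)) * Real.Gamma (ν * (j:ℝ)))) * (ν * (j:ℝ))
            * ((t ^ ν) ^ j * t ^ (-ν)
              * (Real.Gamma (ν * (j:ℝ)) * Real.Gamma (1 - ν) / Real.Gamma (ν * (j:ℝ) + (1 - ν))))
          = β * Real.Gamma (1 - ν) * t ^ (-ν)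
            * ((j:ℝ) * (μ ^ j * (t ^ ν) ^ j) / Real.Gamma (ν * (j:ℝ) + (1 - ν))) := by
        field_simp
      rw [heq]
      gcongr
      linarith
  -- interchange
  have hmeas : ∀ j : ℕ, AEStronglyMeasurable (F j) (volume.restrict (Set.Ioc (0:ℝ) t)) :=
    fun j => (hFint j).aestronglyMeasurable
  have hlin : (∑' j : ℕ, ∫⁻ s in Set.Ioc (0:ℝ) t, ‖F j s‖₊) ≠ ⊤ := by
    have h1 : ∀ j : ℕ, ∫⁻ s in Set.Ioc (0:ℝ) t, ‖F j s‖₊ = ENNReal.ofReal (W j) :=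
      fun j => (ofReal_integral_norm_eq_lintegral_enorm (hFint j)).symm
    rw [tsum_congr h1, ← ENNReal.ofReal_tsum_of_nonneg hWnn hWsum]
    exact ENNReal.ofReal_ne_top
  have hswap : ∫ s in Set.Ioc (0:ℝ) t, (∑' j : ℕ, F j s)
      = ∑' j : ℕ, ∫ s in Set.Ioc (0:ℝ) t, F j s := integral_tsum hmeas hlin
  -- integrand identification
  have hderiv : Set.EqOn (fun s => (t - s) ^ (-ν) * deriv f s) (fun s => ∑' j : ℕ, F j s)
      (Set.Ioc (0:ℝ) t) := by
    intro s hs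
    have hd := (hasDerivAt_f hν0 hν1 hμ hβ f hfs hs.1).deriv
    simp only []
    rw [hd, ← tsum_mul_left]
  -- assemble
  rw [caputoDeriv, intervalIntegral.integral_of_le ht.le,
    setIntegral_congr_fun measurableSet_Ioc hderiv, hswap, ← tsum_mul_left]
  apply tsum_congr
  intro j
  rcases Nat.eq_zero_or_pos j with rfl | hj
  · rw [hF0]
    simp
  · have hjr : (0:ℝ) < (j:ℝ) := Nat.cast_pos.2 hj
    have hjpos : (0:ℝ) < ν * (j : ℝ) := mul_pos hν0 hjr
    have hGj : 0 < Real.Gamma (ν * (j:ℝ)) := Real.Gamma_pos_of_pos hjpos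
    have hGj2 : 0 < Real.Gamma (ν * (j:ℝ) + (1 - ν)) := Real.Gamma_pos_of_pos (by linarith)
    have hval : ∫ s in Set.Ioc (0:ℝ) t, F j s
        = c j * (t ^ (ν * (j : ℝ) + (1 - ν) - 1)
          * (Real.Gamma (ν * (j : ℝ)) * Real.Gamma (1 - ν)
            / Real.Gamma (ν * (j : ℝ) + (1 - ν)))) := by
      rw [hFc j, integral_const_mul, ← intervalIntegral.integral_of_le ht.le,
        beta_value hjpos (by linarith : (0:ℝ) < 1 - ν) ht]
    have hcj : c j = -β * ((j : ℝ) * (-μ) ^ j / Real.Gamma (ν * j + 1)) * (ν * (j : ℝ)) := rfl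
    rw [hval, hcj]
    have hGrec : Real.Gamma (ν * (j:ℝ) + 1) = (ν * (j:ℝ)) * Real.Gamma (ν * (j:ℝ)) :=
      Real.Gamma_add_one hjpos.ne'
    rw [hGrec,
      show ν * (j:ℝ) + (1 - ν) - 1 = ν * (j:ℝ) - ν by ring,
      show ν * (j:ℝ) + (1 - ν) = ν * (j:ℝ) - ν + 1 by ring]
    have hGj3 : 0 < Real.Gamma (ν * (j:ℝ) - ν + 1) := Real.Gamma_pos_of_pos (by nlinarith)
    field_simp

/-- For f(t) = μβ t^ν E_{ν,ν+1}²(−μt^ν), where E_{α,β}^γ(x) = Σ_j (γ)^{(j)} x^j/(j!Γ(αj+β)) is the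
generalized Mittag-Leffler function, we have f(t) = −β Σ_j j(−μt^ν)^j/Γ(νj+1) and
−μ E_{ν,1}(−μt^ν) + (1/β)(μ + d_C^ν/dt^ν)f(t) = 0 for all t > 0. -/
theorem generalized_mittagLeffler_boundary_relation
    (ν μ β : ℝ) (hν : ν ∈ Set.Ioo (0 : ℝ) 1) (hμ : 0 < μ) (hβ : 0 < β)
    (f : ℝ → ℝ)
    (hf : ∀ t : ℝ, f t = μ * β * t ^ ν *
      ∑' j : ℕ, (Nat.ascFactorial 2 j : ℝ) * (-(μ * t ^ ν)) ^ j
        / ((j.factorial : ℝ) * Real.Gamma (ν * j + ν + 1))) :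
    (∀ t : ℝ, 0 < t →
        f t = -β * ∑' j : ℕ, (j : ℝ) * (-(μ * t ^ ν)) ^ j / Real.Gamma (ν * j + 1)) ∧
      (∀ t : ℝ, 0 < t →
        -μ * (∑' r : ℕ, (-(μ * t ^ ν)) ^ r / Real.Gamma (ν * r + 1))
            + (1 / β) * (μ * f t + caputoDeriv ν f t) = 0) := by
  obtain ⟨hν0, hν1⟩ := hν
  have hpow : ∀ u : ℝ, 0 < u → ∀ j : ℕ, (-(μ * u ^ ν)) ^ j = (-μ) ^ j * u ^ (ν * (j : ℝ)) := by
    intro u hu j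
    rw [show -(μ * u ^ ν) = (-μ) * (u ^ ν) by ring, mul_pow]
    congr 1
    rw [← Real.rpow_natCast (u ^ ν) j, ← Real.rpow_mul hu.le]
  have part1 : ∀ t : ℝ, 0 < t →
      f t = -β * ∑' j : ℕ, (j : ℝ) * (-(μ * t ^ ν)) ^ j / Real.Gamma (ν * j + 1) := by
    intro t ht
    have hx : 0 < μ * t ^ ν := mul_pos hμ (Real.rpow_pos_of_pos ht ν)
    have h1 : f t = β * ((μ * t ^ ν) * ∑' j : ℕ, (Nat.ascFactorial 2 j : ℝ) * (-(μ * t ^ ν)) ^ j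
        / ((j.factorial : ℝ) * Real.Gamma (ν * j + ν + 1))) := by
      rw [hf t]; ring
    rw [h1, series_transform hν0 hν1 β hx]
  have hfs : ∀ u : ℝ, 0 < u →
      f u = ∑' j : ℕ, (-β * ((j : ℝ) * (-μ) ^ j / Real.Gamma (ν * j + 1))) * u ^ (ν * (j : ℝ)) := by
    intro u hu
    rw [part1 u hu, ← tsum_mul_left]
    apply tsum_congr
    intro j
    rw [hpow u hu j]
    ring
  refine ⟨part1, ?_⟩
  intro t ht
  have hx : 0 < μ * t ^ ν := mul_pos hμ (Real.rpow_pos_of_pos ht ν)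
  set D : ℕ → ℝ := fun j => -β * (j : ℝ) * (-μ) ^ j * t ^ (ν * (j : ℝ) - ν)
      / Real.Gamma (ν * (j : ℝ) - ν + 1) with hD
  have hcap : caputoDeriv ν f t = ∑' j, D j := caputo_eq hν0 hν1 hμ hβ f hfs ht
  have hDsum : Summable D := by
    refine summable_compare (β * t ^ (-ν)) hν0 hν1 (by linarith : (0:ℝ) < 1 - ν)
      (le_of_lt hx) 1 (fun j => ?_)
    have hjnn : (0:ℝ) ≤ ν * (j : ℝ) := by positivity
    have hGb : 0 < Real.Gamma (ν * (j:ℝ) + (1 - ν)) := Real.Gamma_pos_of_pos (by linarith)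
    have hG3 : 0 < Real.Gamma (ν * (j:ℝ) - ν + 1) := by
      rw [show ν * (j:ℝ) - ν + 1 = ν * (j:ℝ) + (1 - ν) by ring]; exact hGb
    have hDj : D j = -β * (j : ℝ) * (-μ) ^ j * t ^ (ν * (j : ℝ) - ν)
        / Real.Gamma (ν * (j : ℝ) - ν + 1) := rfl
    have hDval : ‖D j‖ = β * (j:ℝ) * μ ^ j * t ^ (ν * (j:ℝ) - ν)
        / Real.Gamma (ν * (j:ℝ) - ν + 1) := by
      rw [hDj, Real.norm_eq_abs, abs_div, abs_of_pos hG3, abs_mul, abs_mul, abs_mul,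
        abs_neg, abs_of_pos hβ, abs_of_nonneg (Nat.cast_nonneg j : (0:ℝ) ≤ (j:ℝ)),
        abs_pow, abs_neg, abs_of_pos hμ, abs_of_nonneg (Real.rpow_nonneg ht.le _)]
    rw [hDval, pow_one]
    rw [show ν * (j:ℝ) - ν = ν * (j:ℝ) + (-ν) by ring, Real.rpow_add ht,
      Real.rpow_mul ht.le, Real.rpow_natCast,
      show ν * (j:ℝ) + -ν + 1 = ν * (j:ℝ) + (1 - ν) by ring, mul_pow]
    have heq : β * (j:ℝ) * μ ^ j * ((t ^ ν) ^ j * t ^ (-ν)) / Real.Gamma (ν * (j:ℝ) + (1 - ν))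
        = β * t ^ (-ν) * ((j:ℝ) * (μ ^ j * (t ^ ν) ^ j) / Real.Gamma (ν * (j:ℝ) + (1 - ν))) := by
      ring
    rw [heq]
    gcongr
    linarith
  have hD0 : D 0 = 0 := by
    have : D 0 = -β * ((0:ℕ) : ℝ) * (-μ) ^ (0:ℕ) * t ^ (ν * ((0:ℕ) : ℝ) - ν)
        / Real.Gamma (ν * ((0:ℕ) : ℝ) - ν + 1) := rfl
    rw [this]
    push_cast
    ring
  have hsucc : ∀ j : ℕ, D (j + 1) = β * μ * ((j:ℝ) * (-(μ * t ^ ν)) ^ j / Real.Gamma (ν * j + 1)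
      + (-(μ * t ^ ν)) ^ j / Real.Gamma (ν * j + 1)) := by
    intro j
    have hDj : D (j + 1) = -β * (((j + 1 : ℕ)) : ℝ) * (-μ) ^ (j + 1)
        * t ^ (ν * (((j + 1 : ℕ)) : ℝ) - ν) / Real.Gamma (ν * (((j + 1 : ℕ)) : ℝ) - ν + 1) := rfl
    rw [hDj, hpow t ht j]
    push_cast
    rw [show ν * ((j:ℝ) + 1) - ν = ν * (j:ℝ) by ring, pow_succ]
    ring
  have hcap2 : caputoDeriv ν f t
      = β * μ * ((∑' j : ℕ, (j:ℝ) * (-(μ * t ^ ν)) ^ j / Real.Gamma (ν * j + 1))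
        + (∑' j : ℕ, (-(μ * t ^ ν)) ^ j / Real.Gamma (ν * j + 1))) := by
    rw [hcap, Summable.tsum_eq_zero_add hDsum, hD0, zero_add, tsum_congr hsucc, tsum_mul_left,
      Summable.tsum_add (summable_S2 hν0 hν1 hx.le) (summable_E hν0 hν1 hx.le)]
  rw [part1 t ht, hcap2]
  field_simp
  ring
end
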